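/- arXiv:1801.04233 — 3 statements merged into one kernel-verified Lean document; each statement's English description precedes it below -/
import Mathlib

section
/- For any Coxeter system (W,S), any I, J ⊆ S, and any w ∈ W, the right projection P^J and left projection Q^I commute: P^J(Q^I(w)) = Q^I(P^J(w)). -/
open CoxeterSystem

variable {B W : Type*} [Group W] {M : CoxeterMatrix B}

/-- The standard parabolic subgroup `W_J`. -/
def CoxeterSystem.parabolic (cs : CoxeterSystem M W) (J : Set B) : Subgroup W :=
  Subgroup.closure (cs.simple '' J)

/-- The set of minimal-length left coset representatives `W^J`. -/
def CoxeterSystem.minReps (cs : CoxeterSystem M W) (J : Set B) : Set W :=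
  {w : W | ∀ s ∈ J, cs.length w < cs.length (w * cs.simple s)}

/-- The set of minimal-length right coset representatives `^J W`. -/
def CoxeterSystem.minRepsLeft (cs : CoxeterSystem M W) (J : Set B) : Set W :=
  {w : W | ∀ s ∈ J, cs.length w < cs.length (cs.simple s * w)}

/-- `P` is the family of right parabolic projections `P^J : W → W`,
`w ↦ w^J` where `w = w^J * w_J`, `w^J ∈ W^J`, `w_J ∈ W_J`. -/
def CoxeterSystem.IsProjFamily (cs : CoxeterSystem M W) (P : Set B → W → W) : Prop :=
  ∀ (J : Set B) (w : W), P J w ∈ cs.minReps J ∧ (P J w)⁻¹ * w ∈ cs.parabolic J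

/-- `Q` is the family of left parabolic projections `Q^J : W → W`,
`w ↦ ^J w` where `w = w_J' * ^J w`, `^J w ∈ ^J W`, `w_J' ∈ W_J`. -/
def CoxeterSystem.IsLProjFamily (cs : CoxeterSystem M W) (Q : Set B → W → W) : Prop :=
  ∀ (J : Set B) (w : W), Q J w ∈ cs.minRepsLeft J ∧ w * (Q J w)⁻¹ ∈ cs.parabolic J

/-!
Write `u = P^J w = b x` with `x = Q^I u` and `b ∈ W_I`. Lengths add in `u = b x`, so a right
descent of `x` in `J` would be one of `u`; hence `x ∈ W^J`. Since `w ∈ u W_J`, we get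
`Q^I w = Q^I (x d)` for some `d ∈ W_J`. Peeling left descents `s ∈ I` off an element `x d'` of
`x W_J` stays inside `x W_J`: by the strong exchange condition for a reduced word of `x` followed
by a `J`-word for `d'`, the deleted letter cannot lie in the word of `x`, which has no left descent
in `I`. So `Q^I w ∈ x W_J`, and `P^J (Q^I w) = x` because `x ∈ W^J`.

The strong exchange condition comes from the reflection-parity representation of `W` on
`W × ZMod 2` (Björner–Brenti, §1.4).
-/

namespace CoxeterSystem

open List

variable (cs : CoxeterSystem M W)

local prefix:100 "s" => cs.simple
local prefix:100 "π" => cs.wordProd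
local prefix:100 "ℓ" => cs.length
local prefix:100 "ris" => cs.rightInvSeq

theorem prod_map_alternatingWord_two_mul {G : Type*} [Monoid G] (f : B → G)
    (i j : B) (m : ℕ) :
    ((alternatingWord i j (2 * m)).map f).prod = (f i * f j) ^ m := by
  induction m with
  | zero => simp [alternatingWord]
  | succ m ih =>
    rw [show 2 * (m + 1) = 2 * m + 1 + 1 by ring, alternatingWord_succ', alternatingWord_succ',
      if_neg (by simp [parity_simps]), if_pos (by simp [parity_simps])]
    rw [map_cons, map_cons, prod_cons, prod_cons, ← mul_assoc, ih, ← pow_succ']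

theorem reverse_alternatingWord_two_mul (i j : B) (m : ℕ) :
    (alternatingWord i j (2 * m)).reverse = alternatingWord j i (2 * m) := by
  induction m with
  | zero => simp [alternatingWord]
  | succ m ih =>
    rw [show 2 * (m + 1) = 2 * m + 1 + 1 by ring, alternatingWord_succ', alternatingWord_succ',
      if_neg (by simp [parity_simps]), if_pos (by simp [parity_simps]), alternatingWord_succ,
      alternatingWord_succ]
    simp [ih]

theorem _root_.List.count_even_of_drop_eq_take {α : Type*} [BEq α] (l : List α) (a : α) {m : ℕ}
    (h : l.drop m = l.take m) : Even (l.count a) := by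
  rw [← take_append_drop m l, count_append, h]
  exact ⟨_, rfl⟩

open scoped Classical

theorem even_count_rightInvSeq_braid (i j : B) (t : W) :
    Even ((ris (alternatingWord i j (2 * M i j))).count t) := by
  -- up to reversal this is the left inversion sequence, whose `k`-th entry is `s j (s i s j)^k`
  rw [← reverse_alternatingWord_two_mul, rightInvSeq_reverse, count_reverse]
  refine count_even_of_drop_eq_take _ _ (m := M i j) (List.ext_getElem (by simp; omega) ?_)
  intro k hk _
  simp only [length_drop, length_leftInvSeq, length_alternatingWord] at hk
  rw [getElem_drop, getElem_take, getElem_leftInvSeq_alternatingWord cs _ _ _ _ (by omega),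
    getElem_leftInvSeq_alternatingWord cs _ _ _ _ (by omega), prod_alternatingWord_eq_mul_pow,
    prod_alternatingWord_eq_mul_pow]
  rw [show (2 * (M i j + k) + 1) / 2 = M i j + k by omega, show (2 * k + 1) / 2 = k by omega,
    pow_add, simple_mul_simple_pow, one_mul]
  simp [parity_simps]

/-- The generators of the reflection-parity representation (Björner–Brenti, §1.4). -/
noncomputable def parityPerm (i : B) : Equiv.Perm (W × ZMod 2) :=
  Function.Involutive.toPerm (fun p ↦ (s i * p.1 * s i, p.2 + if p.1 = s i then 1 else 0)) <| by
    rintro ⟨t, ε⟩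
    have hconj : s i * t * s i = s i ↔ t = s i := by
      rw [mul_assoc, mul_eq_left, mul_eq_one_iff_eq_inv, inv_simple]
    simp only [hconj, simple_mul_simple_cancel_right, ← mul_assoc, simple_mul_simple_self, one_mul,
      add_assoc, CharTwo.add_self_eq_zero, add_zero]

@[simp]
theorem parityPerm_apply (i : B) (t : W) (ε : ZMod 2) :
    cs.parityPerm i (t, ε) = (s i * t * s i, ε + if t = s i then 1 else 0) := rfl

theorem list_prod_map_parityPerm_apply (ω : List B) (t : W) (ε : ZMod 2) :
    (ω.map cs.parityPerm).prod (t, ε) = (π ω * t * (π ω)⁻¹, ε + (ris ω).count t) := by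
  induction ω generalizing ε with
  | nil => simp
  | cons i ω ih =>
    have hconj : π ω * t * (π ω)⁻¹ = s i ↔ (π ω)⁻¹ * s i * π ω = t := by
      constructor <;> intro h <;> rw [← h] <;> group
    rw [map_cons, prod_cons, Equiv.Perm.mul_apply, ih, parityPerm_apply, wordProd_cons, rightInvSeq,
      count_cons, hconj]
    simp [mul_assoc, add_assoc]

theorem isLiftable_parityPerm : M.IsLiftable cs.parityPerm := by
  intro i j
  ext1 ⟨t, ε⟩
  rw [← prod_map_alternatingWord_two_mul, list_prod_map_parityPerm_apply,
    CharTwo.natCast_eq_ite, if_pos (cs.even_count_rightInvSeq_braid i j t)]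
  simp [prod_alternatingWord_eq_mul_pow, simple_mul_simple_pow]

noncomputable def parityRep : W →* Equiv.Perm (W × ZMod 2) :=
  cs.lift ⟨cs.parityPerm, cs.isLiftable_parityPerm⟩

theorem parityRep_wordProd (ω : List B) : cs.parityRep (π ω) = (ω.map cs.parityPerm).prod := by
  simp [parityRep, wordProd, map_list_prod, Function.comp_def]

/-- The parity `η(w, t)` of Björner–Brenti, §1.4. -/
noncomputable def rightInvParity (w t : W) : ZMod 2 := (cs.parityRep w (t, 0)).2

theorem rightInvParity_wordProd (ω : List B) (t : W) :
    cs.rightInvParity (π ω) t = (ris ω).count t := by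
  simp [rightInvParity, parityRep_wordProd, list_prod_map_parityPerm_apply]

theorem parityRep_apply (w t : W) (ε : ZMod 2) :
    cs.parityRep w (t, ε) = (w * t * w⁻¹, ε + cs.rightInvParity w t) := by
  obtain ⟨ω, rfl⟩ := cs.wordProd_surjective w
  rw [rightInvParity_wordProd, parityRep_wordProd, list_prod_map_parityPerm_apply]

theorem rightInvParity_mul (x y t : W) :
    cs.rightInvParity (x * y) t = cs.rightInvParity y t + cs.rightInvParity x (y * t * y⁻¹) := by
  have h := congrArg Prod.snd (cs.parityRep_apply (x * y) t 0)
  rw [map_mul, Equiv.Perm.mul_apply, parityRep_apply, parityRep_apply] at h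
  simpa using h.symm

theorem rightInvParity_one (t : W) : cs.rightInvParity 1 t = 0 := by
  simp [rightInvParity]

theorem rightInvParity_simple_self (i : B) : cs.rightInvParity (s i) (s i) = 1 := by
  simpa using cs.rightInvParity_wordProd [i] (s i)

variable {cs} in
theorem IsReflection.rightInvParity_self {t : W} (ht : cs.IsReflection t) :
    cs.rightInvParity t t = 1 := by
  obtain ⟨u, i, rfl⟩ := ht
  have hinv := cs.rightInvParity_mul u u⁻¹ (u * s i * u⁻¹)
  have hconj := cs.rightInvParity_mul u (s i * u⁻¹) (u * s i * u⁻¹)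
  rw [cs.rightInvParity_mul (s i) u⁻¹] at hconj
  simp only [mul_inv_cancel, rightInvParity_one, inv_inv, mul_assoc, inv_mul_cancel_left,
    mul_inv_rev, inv_simple, simple_mul_simple_cancel_left, inv_mul_cancel, mul_one,
    rightInvParity_simple_self] at hinv hconj ⊢
  rw [hconj, add_right_comm, ← hinv, zero_add]

theorem mem_rightInvSeq_of_rightInvParity_eq_one {ω : List B} {t : W}
    (h : cs.rightInvParity (π ω) t = 1) : t ∈ ris ω := by
  rw [rightInvParity_wordProd] at h
  by_contra hmem
  simp [count_eq_zero_of_not_mem hmem] at h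

theorem length_mul_lt_of_rightInvParity_eq_one {w t : W} (h : cs.rightInvParity w t = 1) :
    ℓ (w * t) < ℓ w := by
  obtain ⟨ω, hω, rfl⟩ := cs.exists_isReduced w
  exact (cs.isRightInversion_of_mem_rightInvSeq hω
    (cs.mem_rightInvSeq_of_rightInvParity_eq_one h)).2

variable {cs} in
theorem IsRightInversion.rightInvParity_eq_one {w t : W} (h : cs.IsRightInversion w t) :
    cs.rightInvParity w t = 1 := by
  obtain ⟨ht, hlt⟩ := h
  have hsplit := cs.rightInvParity_mul (w * t) t t
  rw [mul_assoc, ht.mul_self, mul_one, ht.inv, one_mul,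
    ht.rightInvParity_self] at hsplit
  obtain h0 | h1 : cs.rightInvParity (w * t) t = 0 ∨ cs.rightInvParity (w * t) t = 1 := by
    generalize cs.rightInvParity (w * t) t = a
    revert a
    decide
  · rw [hsplit, h0, add_zero]
  · have := cs.length_mul_lt_of_rightInvParity_eq_one h1
    rw [mul_assoc, ht.mul_self, mul_one] at this
    omega

/-- The strong exchange condition. -/
theorem mem_rightInvSeq_of_isRightInversion {ω : List B} {t : W}
    (h : cs.IsRightInversion (π ω) t) : t ∈ ris ω :=
  cs.mem_rightInvSeq_of_rightInvParity_eq_one h.rightInvParity_eq_one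

variable {cs} in
theorem IsRightInversion.exists_eraseIdx {ω : List B} {t : W}
    (h : cs.IsRightInversion (π ω) t) :
    ∃ j < ω.length, π ω * t = π (ω.eraseIdx j) := by
  obtain ⟨j, hj, rfl⟩ := List.mem_iff_getElem.mp (cs.mem_rightInvSeq_of_isRightInversion h)
  rw [length_rightInvSeq] at hj
  refine ⟨j, hj, ?_⟩
  rw [← cs.wordProd_mul_getD_rightInvSeq ω j, getD_eq_getElem]

variable {cs} in
theorem IsLeftInversion.exists_eraseIdx {ω : List B} {t : W}
    (h : cs.IsLeftInversion (π ω) t) :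
    ∃ j < ω.length, t * π ω = π (ω.eraseIdx j) := by
  have hrev : cs.IsRightInversion (π ω.reverse) t := by
    rwa [wordProd_reverse, isRightInversion_inv_iff]
  have hmem := cs.mem_rightInvSeq_of_isRightInversion hrev
  rw [rightInvSeq_reverse, mem_reverse] at hmem
  obtain ⟨j, hj, rfl⟩ := List.mem_iff_getElem.mp hmem
  rw [length_leftInvSeq] at hj
  refine ⟨j, hj, ?_⟩
  rw [← cs.getD_leftInvSeq_mul_wordProd ω j, getD_eq_getElem]

variable {cs} in
theorem IsRightInversion.exists_eraseIdx_append {ρ τ : List B} {t : W}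
    (h : cs.IsRightInversion (π ρ * π τ) t) :
    (∃ j < ρ.length, π ρ * π τ * t = π (ρ.eraseIdx j) * π τ) ∨
      ∃ j < τ.length, π ρ * π τ * t = π ρ * π (τ.eraseIdx j) := by
  rw [← wordProd_append] at h
  obtain ⟨j, hj, hjt⟩ := h.exists_eraseIdx
  rw [length_append] at hj
  rcases lt_or_ge j ρ.length with hjρ | hjρ
  · rw [eraseIdx_append_of_lt_length hjρ, wordProd_append, wordProd_append] at hjt
    exact .inl ⟨j, hjρ, hjt⟩
  · rw [eraseIdx_append_of_length_le hjρ, wordProd_append, wordProd_append] at hjt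
    exact .inr ⟨j - ρ.length, by omega, hjt⟩

variable {cs} in
theorem IsLeftInversion.exists_eraseIdx_append {ρ τ : List B} {t : W}
    (h : cs.IsLeftInversion (π ρ * π τ) t) :
    (∃ j < ρ.length, t * (π ρ * π τ) = π (ρ.eraseIdx j) * π τ) ∨
      ∃ j < τ.length, t * (π ρ * π τ) = π ρ * π (τ.eraseIdx j) := by
  rw [← wordProd_append] at h
  obtain ⟨j, hj, hjt⟩ := h.exists_eraseIdx
  rw [length_append] at hj
  rcases lt_or_ge j ρ.length with hjρ | hjρ
  · rw [eraseIdx_append_of_lt_length hjρ, wordProd_append, wordProd_append] at hjt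
    exact .inl ⟨j, hjρ, hjt⟩
  · rw [eraseIdx_append_of_length_le hjρ, wordProd_append, wordProd_append] at hjt
    exact .inr ⟨j - ρ.length, by omega, hjt⟩

theorem length_wordProd_eraseIdx_lt {ρ : List B} (hρ : cs.IsReduced ρ) {j : ℕ} (hj : j < ρ.length) :
    ℓ (π (ρ.eraseIdx j)) < ℓ (π ρ) := by
  have := cs.length_wordProd_le (ρ.eraseIdx j)
  have := length_eraseIdx_add_one hj
  rw [hρ.eq]
  omega

theorem mem_parabolic_iff {J : Set B} {v : W} :
    v ∈ cs.parabolic J ↔ ∃ ω : List B, (∀ i ∈ ω, i ∈ J) ∧ π ω = v := by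
  constructor
  · intro hv
    induction hv using Subgroup.closure_induction with
    | mem g hg =>
      obtain ⟨i, hi, rfl⟩ := hg
      exact ⟨[i], by simpa using hi, cs.wordProd_singleton i⟩
    | one => exact ⟨[], by simp, cs.wordProd_nil⟩
    | mul g h _ _ ihg ihh =>
      obtain ⟨ω₁, h1, rfl⟩ := ihg
      obtain ⟨ω₂, h2, rfl⟩ := ihh
      exact ⟨ω₁ ++ ω₂, by simpa [or_imp, forall_and] using ⟨h1, h2⟩, cs.wordProd_append ω₁ ω₂⟩
    | inv g _ ihg =>
      obtain ⟨ω, hω, rfl⟩ := ihg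
      exact ⟨ω.reverse, by simpa using hω, cs.wordProd_reverse ω⟩
  · rintro ⟨ω, hω, rfl⟩
    refine Subgroup.list_prod_mem (K := cs.parabolic J) fun g hg ↦ ?_
    obtain ⟨i, hi, rfl⟩ := List.mem_map.mp hg
    exact Subgroup.subset_closure ⟨i, hω i hi, rfl⟩

theorem simple_mem_parabolic {J : Set B} {i : B} (hi : i ∈ J) : s i ∈ cs.parabolic J :=
  Subgroup.subset_closure ⟨i, hi, rfl⟩

theorem exists_parabolic_word_length_mul_eq {J : Set B} {x : W}
    (hmin : ∀ v ∈ cs.parabolic J, ℓ x ≤ ℓ (x * v)) {v : W} (hv : v ∈ cs.parabolic J) :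
    ∃ τ : List B, (∀ i ∈ τ, i ∈ J) ∧ π τ = v ∧ ℓ (x * v) = ℓ x + τ.length := by
  obtain ⟨ω, hω, rfl⟩ := cs.mem_parabolic_iff.mp hv
  obtain ⟨ρ, hρ, rfl⟩ := cs.exists_isReduced x
  clear hv
  induction ω using List.reverseRecOn with
  | nil => exact ⟨[], by simp, rfl, by simp⟩
  | append_singleton ω i ih =>
    obtain ⟨τ, hτ, hπτ, hlen⟩ := ih fun k hk ↦ hω k (by simp [hk])
    have hi : i ∈ J := hω i (by simp)
    rw [wordProd_append, wordProd_singleton, ← mul_assoc]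
    rcases cs.length_mul_simple (π ρ * π ω) i with hasc | hdesc
    · refine ⟨τ ++ [i], ?_, by rw [wordProd_append, hπτ, wordProd_singleton], ?_⟩
      · simpa [or_imp, forall_and] using ⟨hτ, hi⟩
      · rw [hasc, hlen, length_append, length_singleton, add_assoc]
    have hinv : cs.IsRightInversion (π ρ * π τ) (s i) :=
      ⟨cs.isReflection_simple i, by rw [hπτ]; omega⟩
    rw [← hπτ] at hdesc hlen ⊢
    rcases hinv.exists_eraseIdx_append with ⟨j, hj, hdel⟩ | ⟨j, hj, hdel⟩
    · -- deleting a letter of `ρ` would give a shorter element of the coset `π ρ * W_J`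
      have heq : π (ρ.eraseIdx j) = π ρ * (π τ * s i * (π τ)⁻¹) := by
        rw [eq_mul_inv_of_mul_eq hdel.symm]
        group
      have hshort := cs.length_wordProd_eraseIdx_lt hρ hj
      have hmem : π τ * s i * (π τ)⁻¹ ∈ cs.parabolic J := by
        have hτJ := cs.mem_parabolic_iff.mpr ⟨τ, hτ, rfl⟩
        exact mul_mem (mul_mem hτJ (cs.simple_mem_parabolic hi)) (inv_mem hτJ)
      have := hmin _ hmem
      rw [← heq] at this
      omega
    · refine ⟨τ.eraseIdx j, fun k hk ↦ hτ k (mem_of_mem_eraseIdx hk), ?_, ?_⟩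
      · rw [mul_assoc] at hdel
        exact (mul_left_cancel hdel).symm
      · have := length_eraseIdx_add_one hj
        omega

-- Humphreys, §1.10: compare `x` with a shortest element `x * v₀` of its coset.
theorem length_le_length_mul_of_mem_minReps {J : Set B} {x : W} (hx : x ∈ cs.minReps J)
    {v : W} (hv : v ∈ cs.parabolic J) : ℓ x ≤ ℓ (x * v) := by
  set v₀ := Function.argminOn (fun v ↦ ℓ (x * v)) (cs.parabolic J : Set W) ⟨1, one_mem _⟩
  have hv₀ : v₀ ∈ cs.parabolic J := Function.argminOn_mem _ _ _
  have hmin₀ : ∀ v ∈ cs.parabolic J, ℓ (x * v₀) ≤ ℓ (x * v) := fun v hv ↦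
    Function.argminOn_le (fun v ↦ ℓ (x * v)) (cs.parabolic J : Set W) hv
  obtain ⟨τ, hτ, hπτ, hlen⟩ := cs.exists_parabolic_word_length_mul_eq
    (x := x * v₀) (fun v hv ↦ mul_assoc x v₀ v ▸ hmin₀ _ (mul_mem hv₀ hv)) (inv_mem hv₀)
  rw [mul_inv_cancel_right] at hlen
  rcases eq_nil_or_concat τ with rfl | ⟨l, b, rfl⟩
  · simpa [hlen] using hmin₀ v hv
  -- otherwise `b ∈ J` would be a right descent of `x`
  have hxb : x * s b = x * v₀ * π l := by
    rw [← simple_mul_simple_cancel_right (w := x * v₀ * π l) cs b, mul_assoc _ (π l),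
      ← wordProd_concat, hπτ, mul_inv_cancel_right]
  have hdesc := hx b (hτ b (by simp))
  rw [hxb] at hdesc
  have := cs.length_mul_le (x * v₀) (π l)
  have := cs.length_wordProd_le l
  rw [length_concat] at hlen
  omega

theorem length_mul_of_mem_minReps {J : Set B} {x v : W} (hx : x ∈ cs.minReps J)
    (hv : v ∈ cs.parabolic J) : ℓ (x * v) = ℓ x + ℓ v := by
  obtain ⟨τ, -, rfl, hlen⟩ := cs.exists_parabolic_word_length_mul_eq
    (fun _ ↦ cs.length_le_length_mul_of_mem_minReps hx) hv
  have := cs.length_wordProd_le τ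
  have := cs.length_mul_le x (π τ)
  omega

theorem eq_of_mem_minReps {J : Set B} {x y : W} (hx : x ∈ cs.minReps J) (hy : y ∈ cs.minReps J)
    (hxy : x⁻¹ * y ∈ cs.parabolic J) : x = y := by
  have hxy' := cs.length_mul_of_mem_minReps hx hxy
  have hyx := cs.length_mul_of_mem_minReps hy (by simpa using inv_mem hxy)
  rw [mul_inv_cancel_left] at hxy' hyx
  have hinv : ℓ (y⁻¹ * x) = ℓ (x⁻¹ * y) := by rw [← length_inv, mul_inv_rev, inv_inv]
  rw [← inv_mul_eq_one, ← cs.length_eq_zero_iff]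
  omega

theorem mem_minRepsLeft_iff {J : Set B} {x : W} : x ∈ cs.minRepsLeft J ↔ x⁻¹ ∈ cs.minReps J := by
  have (i : B) : ℓ (x⁻¹ * s i) = ℓ (s i * x) := by
    rw [← length_inv, mul_inv_rev, inv_inv, inv_simple]
  simp only [minRepsLeft, minReps, Set.mem_ofPred_eq, length_inv, this]

theorem length_mul_of_mem_minRepsLeft {J : Set B} {x v : W} (hx : x ∈ cs.minRepsLeft J)
    (hv : v ∈ cs.parabolic J) : ℓ (v * x) = ℓ v + ℓ x := by
  have := cs.length_mul_of_mem_minReps (cs.mem_minRepsLeft_iff.mp hx) (inv_mem hv)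
  rwa [← mul_inv_rev, length_inv, length_inv, length_inv, add_comm] at this

theorem eq_of_mem_minRepsLeft {J : Set B} {x y : W} (hx : x ∈ cs.minRepsLeft J)
    (hy : y ∈ cs.minRepsLeft J) (hxy : y * x⁻¹ ∈ cs.parabolic J) : x = y :=
  inv_injective <| cs.eq_of_mem_minReps (cs.mem_minRepsLeft_iff.mp hx)
    (cs.mem_minRepsLeft_iff.mp hy) (by simpa using inv_mem hxy)

theorem inv_mul_simple_mul_mem_parabolic {I J : Set B} {x v : W} {i : B}
    (hxI : x ∈ cs.minRepsLeft I) (hi : i ∈ I) (hdesc : ℓ (s i * v) < ℓ v)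
    (hv : x⁻¹ * v ∈ cs.parabolic J) : x⁻¹ * (s i * v) ∈ cs.parabolic J := by
  obtain ⟨τ, hτ, hπτ⟩ := cs.mem_parabolic_iff.mp hv
  obtain ⟨ρ, hρ, rfl⟩ := cs.exists_isReduced x
  obtain rfl : v = π ρ * π τ := by rw [hπτ, mul_inv_cancel_left]
  rcases IsLeftInversion.exists_eraseIdx_append ⟨cs.isReflection_simple i, hdesc⟩ with
    ⟨j, hj, hdel⟩ | ⟨j, hj, hdel⟩
  · rw [← mul_assoc] at hdel
    have hshort : ℓ (s i * π ρ) < ℓ (π ρ) :=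
      mul_right_cancel hdel ▸ cs.length_wordProd_eraseIdx_lt hρ hj
    exact absurd (hxI i hi) (by omega)
  · rw [hdel, inv_mul_cancel_left]
    exact cs.mem_parabolic_iff.mpr ⟨_, fun k hk ↦ hτ k (mem_of_mem_eraseIdx hk), rfl⟩

variable {cs}

theorem IsProjFamily.apply_eq {P : Set B → W → W} (hP : cs.IsProjFamily P) {J : Set B}
    {x z : W} (hx : x ∈ cs.minReps J) (hxz : x⁻¹ * z ∈ cs.parabolic J) : P J z = x :=
  cs.eq_of_mem_minReps (hP J z).1 hx <| by
    simpa [mul_assoc] using mul_mem (hP J z).2 (inv_mem hxz)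

namespace IsLProjFamily

variable {Q : Set B → W → W} (hQ : cs.IsLProjFamily Q) {I : Set B}
include hQ

theorem apply_eq {x z : W} (hx : x ∈ cs.minRepsLeft I) (hxz : z * x⁻¹ ∈ cs.parabolic I) :
    Q I z = x :=
  cs.eq_of_mem_minRepsLeft (hQ I z).1 hx <| by
    simpa [mul_assoc] using mul_mem (inv_mem hxz) (hQ I z).2

theorem apply_of_mem {x : W} (hx : x ∈ cs.minRepsLeft I) : Q I x = x :=
  hQ.apply_eq hx (by simp [one_mem])

theorem apply_mul_of_mem_parabolic {b : W} (hb : b ∈ cs.parabolic I) (z : W) :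
    Q I (b * z) = Q I z :=
  hQ.apply_eq (hQ I z).1 (mul_assoc b z _ ▸ mul_mem hb (hQ I z).2)

theorem apply_mem_minReps {J : Set B} {u : W} (hu : u ∈ cs.minReps J) : Q I u ∈ cs.minReps J := by
  set x := Q I u
  have hxI : x ∈ cs.minRepsLeft I := (hQ I u).1
  have hb : u * x⁻¹ ∈ cs.parabolic I := (hQ I u).2
  have hlen := cs.length_mul_of_mem_minRepsLeft hxI hb
  rw [inv_mul_cancel_right] at hlen
  intro i hi
  have hu_lt := hu i hi
  rw [show u * s i = u * x⁻¹ * (x * s i) by group] at hu_lt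
  have := cs.length_mul_le (u * x⁻¹) (x * s i)
  rcases cs.length_mul_simple x i with h | h <;> omega

theorem inv_mul_apply_mem_parabolic {J : Set B} {x v : W} (hxI : x ∈ cs.minRepsLeft I)
    (hv : x⁻¹ * v ∈ cs.parabolic J) : x⁻¹ * Q I v ∈ cs.parabolic J := by
  induction hn : ℓ v using Nat.strong_induction_on generalizing v with
  | _ n ih =>
    by_cases hvI : v ∈ cs.minRepsLeft I
    · rwa [hQ.apply_of_mem hvI]
    obtain ⟨i, hi, hdesc⟩ : ∃ i ∈ I, ℓ (s i * v) < ℓ v := by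
      simp only [minRepsLeft, Set.mem_ofPred_eq, not_forall, not_lt] at hvI
      obtain ⟨i, hi, hle⟩ := hvI
      exact ⟨i, hi, lt_of_le_of_ne hle (cs.length_simple_mul_ne v i)⟩
    rw [← hQ.apply_mul_of_mem_parabolic (cs.simple_mem_parabolic hi)]
    exact ih _ (hn ▸ hdesc) (cs.inv_mul_simple_mul_mem_parabolic hxI hi hdesc hv) rfl

end IsLProjFamily

end CoxeterSystem

theorem stmt_1 (cs : CoxeterSystem M W) (P Q : Set B → W → W)
    (hP : cs.IsProjFamily P) (hQ : cs.IsLProjFamily Q)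
    (I J : Set B) (w : W) :
    P J (Q I w) = Q I (P J w) := by
  set u := P J w
  set x := Q I u
  have hxJ : x ∈ cs.minReps J := hQ.apply_mem_minReps (hP J w).1
  have hQw : Q I w = Q I (x * (u⁻¹ * w)) := calc
    Q I w = Q I (u * x⁻¹ * (x * (u⁻¹ * w))) := by
      rw [mul_assoc, inv_mul_cancel_left, mul_inv_cancel_left]
    _ = Q I (x * (u⁻¹ * w)) := hQ.apply_mul_of_mem_parabolic (hQ I u).2 _
  refine hP.apply_eq hxJ ?_
  rw [hQw]
  exact hQ.inv_mul_apply_mem_parabolic (hQ I u).1 (by simpa using (hP J w).2)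
end

section
/- Let (W,S) be a Coxeter system. The family of functions {P^u : u ∈ W} ⊆ End(V_W), where V_W is the free ℤ-module on W and P^u acts by the projection composition along a reduced expression of u, is linearly independent over ℤ. -/
open CoxeterSystem

variable {B W : Type*} [Group W] {M : CoxeterMatrix B}

/-- The projection `P^{{s}}` onto `W^{{s}}`: removes a trailing `s` if that shortens `w`. -/
noncomputable def CoxeterSystem.projSimple (cs : CoxeterSystem M W) (s : B) (w : W) : W :=
  if cs.length (w * cs.simple s) < cs.length w then w * cs.simple s else w

/-- For a word `ω = s₁ ⋯ s_k`, the composition `P^{{s₁}} ∘ ⋯ ∘ P^{{s_k}}`. -/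
noncomputable def CoxeterSystem.projWord (cs : CoxeterSystem M W) (ω : List B) : W → W :=
  ω.foldr (fun s g => cs.projSimple s ∘ g) id

/-- The Bruhat order, via the subword property: `u ≤ v` iff some reduced word for `v`
has a subword whose product is `u`. -/
def CoxeterSystem.bruhatLE (cs : CoxeterSystem M W) (u v : W) : Prop :=
  ∃ ω : List B, cs.IsReduced ω ∧ cs.wordProd ω = v ∧
    ∃ ω' : List B, ω'.Sublist ω ∧ cs.wordProd ω' = u

/-!
Write `χ_v(f)` for the coefficient of `e` in `f(v)`. For a reduced word `ω` of `u`, the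
element `P^u(v)` is obtained from `v` by deleting the letters of a subword of `ω` from the
right, so `χ_v(P^u) ≠ 0` forces `v` to be a subword product of `ω`: either `v = u` or
`ℓ(v) < ℓ(u)`. Since also `χ_u(P^u) = 1`, the family `P^u` is unitriangular against the
functionals `χ_v` with respect to length, hence linearly independent.
-/

theorem linearIndependent_of_triangular {ι R N : Type*} [Ring R] [AddCommGroup N] [Module R N]
    (f : ι → N) (φ : ι → N →ₗ[R] R) (ℓ : ι → ℕ) (hdiag : ∀ i, φ i (f i) = 1)
    (htri : ∀ i j, φ i (f j) ≠ 0 → i = j ∨ ℓ i < ℓ j) : LinearIndependent R f := by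
  classical
  rw [linearIndependent_iff']
  intro s g hsum i hi
  by_contra hgi
  obtain ⟨v, hv, hmax⟩ := (s.filter (g · ≠ 0)).exists_max_image ℓ ⟨i, by simp [hi, hgi]⟩
  rw [Finset.mem_filter] at hv
  have hterm : ∀ j ∈ s, g j * φ v (f j) = if j = v then g v else 0 := by
    intro j hj
    split_ifs with hjv
    · simp [hjv, hdiag]
    · by_contra hne
      obtain hjv' | hlt := htri v j (right_ne_zero_of_mul hne)
      · exact hjv hjv'.symm
      · exact (hmax j (Finset.mem_filter.2 ⟨hj, left_ne_zero_of_mul hne⟩)).not_gt hlt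
  have hφ := congr_arg (φ v) hsum
  simp only [map_sum, map_smul, smul_eq_mul, map_zero] at hφ
  rw [Finset.sum_congr rfl hterm, Finset.sum_ite_eq', if_pos hv.1] at hφ
  exact hv.2 hφ

namespace CoxeterSystem

variable (cs : CoxeterSystem M W)

theorem projSimple_mul_simple {w : W} {s : B} (h : cs.length w < cs.length (w * cs.simple s)) :
    cs.projSimple s (w * cs.simple s) = w := by
  simp [projSimple, simple_mul_simple_cancel_right, h]

theorem projWord_cons (s : B) (ω : List B) :
    cs.projWord (s :: ω) = cs.projSimple s ∘ cs.projWord ω := rfl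

theorem projWord_mul_wordProd {w : W} {ω : List B}
    (h : cs.length (w * cs.wordProd ω) = cs.length w + ω.length) :
    cs.projWord ω (w * cs.wordProd ω) = w := by
  induction ω generalizing w with
  | nil => simp [projWord]
  | cons s ω ih =>
    rw [wordProd_cons, ← mul_assoc] at h ⊢
    have h₁ := cs.length_mul_le (w * cs.simple s) (cs.wordProd ω)
    have h₂ := cs.length_mul_le w (cs.simple s)
    have h₃ := cs.length_wordProd_le ω
    rw [cs.length_simple] at h₂
    simp only [List.length_cons] at h
    rw [projWord_cons, Function.comp_apply, ih (by omega), cs.projSimple_mul_simple (by omega)]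

theorem projWord_wordProd {ω : List B} (hω : cs.IsReduced ω) :
    cs.projWord ω (cs.wordProd ω) = 1 := by
  simpa using cs.projWord_mul_wordProd (w := 1) (by simpa using hω.eq)

theorem exists_sublist_projWord_mul_wordProd (ω : List B) (v : W) :
    ∃ τ : List B, τ.Sublist ω ∧ cs.projWord ω v * cs.wordProd τ = v := by
  induction ω with
  | nil => exact ⟨[], List.Sublist.refl _, by simp [projWord]⟩
  | cons s ω ih =>
    obtain ⟨τ, hτω, hτ⟩ := ih
    rw [projWord_cons, Function.comp_apply, projSimple]
    split_ifs
    · refine ⟨s :: τ, hτω.cons_cons s, ?_⟩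
      rwa [wordProd_cons, mul_assoc, simple_mul_simple_cancel_left]
    · exact ⟨τ, hτω.cons s, hτ⟩

theorem eq_or_length_lt_of_projWord_eq_one {ω : List B} (hω : cs.IsReduced ω) {v : W}
    (hv : cs.projWord ω v = 1) :
    v = cs.wordProd ω ∨ cs.length v < cs.length (cs.wordProd ω) := by
  obtain ⟨τ, hτω, hτ⟩ := cs.exists_sublist_projWord_mul_wordProd ω v
  rw [hv, one_mul] at hτ
  subst hτ
  by_cases hlen : τ.length = ω.length
  · exact .inl (by rw [hτω.eq_of_length hlen])
  · have := cs.length_wordProd_le τ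
    have := hτω.length_le
    exact .inr (by rw [hω.eq]; omega)

end CoxeterSystem

theorem stmt_13 (cs : CoxeterSystem M W)
    (F : W → Module.End ℤ (W →₀ ℤ))
    (hF : ∀ (u : W) (ω : List B), cs.IsReduced ω → cs.wordProd ω = u →
      F u = Finsupp.lmapDomain ℤ ℤ (cs.projWord ω)) :
    LinearIndependent ℤ F := by
  classical
  refine linearIndependent_of_triangular F
    (fun v => Finsupp.lapply 1 ∘ₗ LinearMap.applyₗ (Finsupp.single v 1)) cs.length ?_ ?_
  · intro u
    obtain ⟨ω, hω, rfl⟩ := cs.exists_isReduced u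
    simp [hF _ ω hω rfl, cs.projWord_wordProd hω]
  · intro v u h
    obtain ⟨ω, hω, rfl⟩ := cs.exists_isReduced u
    simp only [hF _ ω hω rfl, LinearMap.coe_comp, Function.comp_apply, LinearMap.applyₗ_apply_apply,
      Finsupp.lmapDomain_apply, Finsupp.mapDomain_single, Finsupp.lapply_apply, Finsupp.single_apply,
      ne_eq, ite_eq_right_iff, one_ne_zero, imp_false, Decidable.not_not] at h
    exact cs.eq_or_length_lt_of_projWord_eq_one hω h
end

section
/- Let (W,S) be a Coxeter system and v ∈ W with reduced expression s₁⋯s_k. Define P̄^v := (id − P^{{s₁}})(id − P^{{s₂}})⋯(id − P^{{s_k}}) ∈ End(V_W). Then P̄^v = Σ_{u ≤ v} (−1)^{ℓ(u)} P^u, where the sum is over the Bruhat interval [e,v]. In particular P̄^v is independent of the chosen reduced expression. -/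
open CoxeterSystem

variable {B W : Type*} [Group W] {M : CoxeterMatrix B}

/-- The linearized projection `P^{{s}}` on the free `ℤ`-module on `W`. -/
noncomputable def CoxeterSystem.projS (cs : CoxeterSystem M W) (s : B) :
    Module.End ℤ (W →₀ ℤ) :=
  Finsupp.lmapDomain ℤ ℤ (cs.projSimple s)

/-- For a word `ω = s₁ ⋯ s_k`, the endomorphism `(id − P^{{s₁}}) ⋯ (id − P^{{s_k}})`. -/
noncomputable def CoxeterSystem.projBarWord (cs : CoxeterSystem M W) (ω : List B) :
    Module.End ℤ (W →₀ ℤ) :=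
  ω.foldr (fun s g => (1 - cs.projS s) * g) 1

/-!
Both sides are computed one letter at a time. Write `D(ω)` for the set of products of subwords
of `ω`. Then `D(i :: ω)` consists of the `u ∈ D(ω)` with `u < s i u` together with their
translates `s i u`; as `P^{s i} P^u` is `P^{s i u}` when `u < s i u` and `P^u` otherwise,
multiplying the sum over `D(ω)` by `1 - P^{s i}` gives the sum over `D(i :: ω)`.

This uses that `D(ω)` is closed under shortening left multiplication by a reflection `t`, i.e. the
strong exchange condition. It holds for every word, because the parity of the number of
occurrences of `t` in the left inversion sequence of `ω` depends only on `π ω` (Tits' action of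
`W` on `W × ZMod 2`). Hence `D(ω)` contains everything below `π ω` in the reflection-chain Bruhat
order; conversely, for reduced `ω`, every subword product lies below `π ω`, by the lifting property
`y ≤ x → s y ≤ x ∨ s y ≤ s x`. So for reduced `ω`, `D(ω)` is the Bruhat interval `[e, π ω]`.
-/

namespace CoxeterSystem

variable (cs : CoxeterSystem M W)

local prefix:100 "s" => cs.simple
local prefix:100 "π" => cs.wordProd
local prefix:100 "ℓ" => cs.length
local prefix:100 "lis" => cs.leftInvSeq

theorem leftInvSeq_append (α β : List B) :
    lis (α ++ β) = lis α ++ (lis β).map (MulAut.conj (π α)) := by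
  induction α with
  | nil => simp
  | cons i α ih =>
    simp only [List.cons_append, leftInvSeq, ih, List.map_append, List.map_map, wordProd_cons]
    congr 2
    ext t
    simp [mul_assoc]

theorem prod_map_alternatingWord {G : Type*} [Monoid G] (f : B → G) (i i' : B) (p : ℕ) :
    ((alternatingWord i i' (2 * p)).map f).prod = (f i * f i') ^ p := by
  induction p with
  | zero => simp [alternatingWord]
  | succ p ih =>
    have hodd : ¬ Even (2 * p + 1) := by simp
    rw [show 2 * (p + 1) = 2 * p + 1 + 1 by ring, alternatingWord_succ', alternatingWord_succ',
      if_neg hodd, if_pos (even_two_mul p), List.map_cons, List.map_cons, List.prod_cons,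
      List.prod_cons, ih, pow_succ', mul_assoc]

section Parity

variable [DecidableEq W]

theorem count_leftInvSeq_append (α β : List B) (t : W) :
    (lis (α ++ β)).count t = (lis α).count t + (lis β).count ((π α)⁻¹ * t * π α) := by
  have ht : t = MulAut.conj (π α) ((π α)⁻¹ * t * π α) := by simp [mul_assoc]
  rw [leftInvSeq_append, List.count_append, ht,
    List.count_map_of_injective _ _ (MulEquiv.injective _)]
  simp [mul_assoc]

def parityAction (i : B) : Function.End (W × ZMod 2) :=
  fun p => (s i * p.1 * s i, p.2 + if p.1 = s i then 1 else 0)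

theorem prod_map_parityAction_apply (ω : List B) (p : W × ZMod 2) :
    (ω.map cs.parityAction).prod p =
      (π ω * p.1 * (π ω)⁻¹, p.2 + (lis ω).count (π ω * p.1 * (π ω)⁻¹)) := by
  induction ω with
  | nil => simp [Function.End.one_def]
  | cons i ω ih =>
    set x := π ω * p.1 * (π ω)⁻¹
    have hx : π (i :: ω) * p.1 * (π (i :: ω))⁻¹ = MulAut.conj (s i) x := by
      simp [x, wordProd_cons, mul_assoc]
    show cs.parityAction i ((ω.map cs.parityAction).prod p) = _
    rw [ih, hx, leftInvSeq, List.count_cons,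
      List.count_map_of_injective _ _ (MulEquiv.injective _)]
    simp only [parityAction, MulAut.conj_apply, inv_simple, beq_iff_eq, Prod.mk.injEq, true_and]
    have : (s i = s i * x * s i) ↔ x = s i := by
      rw [eq_comm, mul_assoc, mul_eq_left, mul_eq_one_iff_eq_inv, inv_simple]
    simp only [this]
    push_cast
    ring

theorem even_count_leftInvSeq_alternatingWord (i i' : B) (t : W) :
    Even ((lis (alternatingWord i i' (2 * M i i'))).count t) := by
  -- the left inversion sequence of the braid word is periodic with period `M i i'`
  set m := M i i'
  set a : ℕ → W := fun k => π (alternatingWord i' i (2 * k + 1))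
  have ha : a ∘ (m + ·) = a := by
    funext k
    simp only [Function.comp_apply, a, prod_alternatingWord_eq_mul_pow]
    rw [show (2 * (m + k) + 1) / 2 = m + k by omega, show (2 * k + 1) / 2 = k by omega, pow_add,
      simple_mul_simple_pow', one_mul]
    simp
  have hlis : lis (alternatingWord i i' (2 * m)) = (List.range (m + m)).map a :=
    List.ext_getElem (by simp [two_mul]) fun k h _ =>
      by simp [a, getElem_leftInvSeq_alternatingWord cs i i' m k (by simpa using h)]
  rw [hlis, List.range_add, List.map_append, List.map_map, ha, List.count_append]
  exact ⟨_, rfl⟩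

theorem isLiftable_parityAction : M.IsLiftable cs.parityAction := by
  intro i i'
  rw [← prod_map_alternatingWord]
  funext p
  rw [prod_map_parityAction_apply, prod_alternatingWord_eq_mul_pow, if_pos (even_two_mul _),
    Nat.mul_div_cancel_left _ two_pos, simple_mul_simple_pow, one_mul, one_mul, inv_one, mul_one,
    (ZMod.natCast_eq_zero_iff_even).mpr (cs.even_count_leftInvSeq_alternatingWord i i' p.1),
    add_zero]
  rfl

theorem count_leftInvSeq_eq_of_wordProd_eq {ω ω' : List B} (h : π ω = π ω') (t : W) :
    ((lis ω).count t : ZMod 2) = (lis ω').count t := by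
  let φ := cs.lift ⟨cs.parityAction, cs.isLiftable_parityAction⟩
  have hφ : ∀ ω, φ (π ω) = (ω.map cs.parityAction).prod := fun ω => by
    rw [wordProd, map_list_prod, List.map_map]
    congr 1
    exact List.map_congr_left fun i _ => cs.lift_apply_simple cs.isLiftable_parityAction i
  have := congrArg (fun f : Function.End (W × ZMod 2) => (f ((π ω)⁻¹ * t * π ω, 0)).2)
    (congrArg φ h)
  rw [hφ, hφ, prod_map_parityAction_apply, prod_map_parityAction_apply] at this
  simpa [← h, mul_assoc] using this

theorem count_leftInvSeq_palindrome (ρ : List B) (i : B) :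
    ((lis (ρ ++ i :: ρ.reverse)).count (π ρ * s i * (π ρ)⁻¹) : ZMod 2) = 1 := by
  set t := π ρ * s i * (π ρ)⁻¹
  have hconj : (π ρ)⁻¹ * t * π ρ = s i := by simp [t, mul_assoc]
  have hcancel := cs.count_leftInvSeq_eq_of_wordProd_eq (ω := ρ ++ ρ.reverse) (ω' := [])
    (by simp [wordProd_append]) t
  rw [count_leftInvSeq_append, hconj] at hcancel
  rw [count_leftInvSeq_append, hconj, ← List.singleton_append, count_leftInvSeq_append]
  simp only [leftInvSeq_singleton, leftInvSeq_nil, wordProd_singleton, inv_simple,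
    simple_mul_simple_self, one_mul, List.count_singleton_self, List.count_nil] at hcancel ⊢
  push_cast at hcancel ⊢
  linear_combination hcancel

theorem count_leftInvSeq_of_isLeftInversion {ω : List B} {t : W}
    (ht : cs.IsLeftInversion (π ω) t) : ((lis ω).count t : ZMod 2) = 1 := by
  -- write `π ω` as the palindrome `ρ ++ i :: ρ.reverse` for `t`, followed by a reduced word
  -- for `t * π ω`, in which `t` does not occur
  obtain ⟨⟨u, i, rfl⟩, hlt⟩ := ht
  obtain ⟨ρ, -, rfl⟩ := cs.exists_isReduced u
  obtain ⟨σ, hσ, hσprod⟩ := cs.exists_isReduced (π ρ * s i * (π ρ)⁻¹ * π ω)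
  set t := π ρ * s i * (π ρ)⁻¹
  have htt : t * t = 1 := by simp [t, mul_assoc]
  have hτ : π (ρ ++ i :: ρ.reverse) = t := by simp [t, wordProd_append, wordProd_cons, mul_assoc]
  have hσt : (lis σ).count t = 0 := List.count_eq_zero.mpr fun hmem => by
    have := (cs.isLeftInversion_of_mem_leftInvSeq hσ hmem).2
    rw [← hσprod, ← mul_assoc, htt, one_mul] at this
    omega
  rw [cs.count_leftInvSeq_eq_of_wordProd_eq (ω' := (ρ ++ i :: ρ.reverse) ++ σ)
      (by rw [wordProd_append, hτ, ← hσprod, ← mul_assoc, htt, one_mul]),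
    count_leftInvSeq_append, hτ, show t⁻¹ * t * t = t by group, hσt, Nat.cast_add,
    count_leftInvSeq_palindrome, Nat.cast_zero, add_zero]

end Parity

theorem exists_eraseIdx_of_isLeftInversion {ω : List B} {t : W}
    (ht : cs.IsLeftInversion (π ω) t) : ∃ j < ω.length, π (ω.eraseIdx j) = t * π ω := by
  classical
  have hmem : t ∈ lis ω := List.count_pos_iff.mp <| Nat.pos_of_ne_zero fun h0 => by
    simpa [h0] using cs.count_leftInvSeq_of_isLeftInversion ht
  obtain ⟨j, hj, rfl⟩ := List.getElem_of_mem hmem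
  refine ⟨j, by simpa using hj, ?_⟩
  rw [← getD_leftInvSeq_mul_wordProd, List.getD_eq_getElem]

/-- Its reflexive-transitive closure is the Bruhat order, defined by chains of reflections. -/
def BruhatStep (x y : W) : Prop := ∃ t, cs.IsLeftInversion x t ∧ t * x = y

theorem bruhatStep_simple_mul {x : W} {i : B} (h : ℓ (s i * x) < ℓ x) :
    cs.BruhatStep x (s i * x) :=
  ⟨s i, ⟨cs.isReflection_simple i, h⟩, rfl⟩

variable {cs} in
theorem BruhatStep.simple_mul {x y : W} (h : cs.BruhatStep x y) (i : B) :
    Relation.ReflTransGen cs.BruhatStep x (s i * y) ∨ cs.BruhatStep (s i * x) (s i * y) := by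
  obtain ⟨t, ⟨ht, hlt⟩, rfl⟩ := h
  have ht' : cs.IsReflection (s i * t * s i) := by simpa using ht.conj (s i)
  have hy : s i * (t * x) = s i * t * s i * (s i * x) := by simp [mul_assoc]
  rcases lt_or_gt_of_ne (ht'.length_mul_right_ne (s i * x)) with hdown | hup
  · exact .inr ⟨_, ⟨ht', hdown⟩, hy.symm⟩
  -- `s i * y` has the word `i :: ρ`; exchanging `s i * t * s i` out of it must delete the
  -- leading `i`, since deleting a later letter would make `x` shorter than `y`.
  suffices hx : s i * (t * x) = x by rw [hx]; exact .inl .refl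
  obtain ⟨ρ, hρ, hρprod⟩ := cs.exists_isReduced (t * x)
  have hz : s i * t * s i * π (i :: ρ) = s i * x := by
    rw [wordProd_cons, ← hρprod, hy, ← mul_assoc, ← sq, ht'.pow_two, one_mul]
  obtain ⟨j, hj, hjprod⟩ := cs.exists_eraseIdx_of_isLeftInversion
    ⟨ht', by rw [hz, wordProd_cons, ← hρprod, hy]; exact hup⟩
  rw [hz] at hjprod
  rcases j with _ | j
  · rw [List.eraseIdx_cons_zero] at hjprod
    rw [hρprod, hjprod, simple_mul_simple_cancel_left]
  · exfalso
    rw [List.eraseIdx_cons_succ, wordProd_cons] at hjprod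
    have hx : x = π (ρ.eraseIdx j) := by simpa [mul_assoc] using hjprod.symm
    have := cs.length_wordProd_le (ρ.eraseIdx j)
    rw [← hx, List.length_eraseIdx_of_lt (by simpa using hj), ← hρ.eq, ← hρprod] at this
    rw [List.length_cons] at hj
    omega

theorem reflTransGen_simple_mul {x y : W} (h : Relation.ReflTransGen cs.BruhatStep x y) (i : B) :
    Relation.ReflTransGen cs.BruhatStep x (s i * y) ∨
      Relation.ReflTransGen cs.BruhatStep (s i * x) (s i * y) := by
  induction h with
  | refl => exact .inr .refl
  | tail hxy hstep ih =>
    rcases hstep.simple_mul i with h | h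
    · exact .inl (hxy.trans h)
    · exact ih.imp (fun h' => h'.tail h) (fun h' => h'.tail h)

theorem bruhatStep_wordProd_cons {i : B} {ω : List B} (hω : cs.IsReduced (i :: ω)) :
    cs.BruhatStep (π (i :: ω)) (π ω) := by
  have h := cs.bruhatStep_simple_mul (x := π (i :: ω)) (i := i)
  rw [wordProd_cons, simple_mul_simple_cancel_left] at h
  rw [wordProd_cons]
  have hω' : cs.IsReduced ω := hω.drop 1
  exact h (by rw [← wordProd_cons, hω.eq, hω'.eq]; simp)

theorem reflTransGen_wordProd_of_sublist {τ ω : List B} (hsub : τ.Sublist ω) (hω : cs.IsReduced ω) :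
    Relation.ReflTransGen cs.BruhatStep (π ω) (π τ) := by
  induction hsub with
  | slnil => exact .refl
  | @cons τ ω i _ ih =>
    have hω' : cs.IsReduced ω := hω.drop 1
    exact .head (cs.bruhatStep_wordProd_cons hω) (ih hω')
  | @cons_cons τ ω i _ ih =>
    have hω' : cs.IsReduced ω := hω.drop 1
    rcases cs.reflTransGen_simple_mul (ih hω') i with h | h
    · simpa [wordProd_cons] using .head (cs.bruhatStep_wordProd_cons hω) h
    · simpa [wordProd_cons] using h

section SubwordProds

variable [DecidableEq W]

def subwordProds (ω : List B) : Finset W := (ω.sublists.map cs.wordProd).toFinset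

theorem mem_subwordProds {ω : List B} {x : W} :
    x ∈ cs.subwordProds ω ↔ ∃ τ, τ.Sublist ω ∧ π τ = x := by
  simp [subwordProds]

variable {cs} in
theorem BruhatStep.mem_subwordProds {ω : List B} {x y : W} (h : cs.BruhatStep x y)
    (hx : x ∈ cs.subwordProds ω) : y ∈ cs.subwordProds ω := by
  obtain ⟨t, ht, rfl⟩ := h
  obtain ⟨τ, hτ, rfl⟩ := cs.mem_subwordProds.mp hx
  obtain ⟨j, -, hj⟩ := cs.exists_eraseIdx_of_isLeftInversion ht
  exact cs.mem_subwordProds.mpr ⟨τ.eraseIdx j, (τ.eraseIdx_sublist j).trans hτ, hj⟩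

theorem mem_subwordProds_of_reflTransGen {ω : List B} {u : W}
    (h : Relation.ReflTransGen cs.BruhatStep (π ω) u) : u ∈ cs.subwordProds ω := by
  induction h with
  | refl => exact cs.mem_subwordProds.mpr ⟨ω, .refl ω, rfl⟩
  | tail _ hstep ih => exact hstep.mem_subwordProds ih

theorem bruhatLE_wordProd_iff {ω : List B} (hω : cs.IsReduced ω) {u : W} :
    cs.bruhatLE u (π ω) ↔ u ∈ cs.subwordProds ω := by
  constructor
  · rintro ⟨ω', hω', hprod, τ, hτ, rfl⟩
    exact cs.mem_subwordProds_of_reflTransGen (hprod ▸ cs.reflTransGen_wordProd_of_sublist hτ hω')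
  · intro hu
    obtain ⟨τ, hτ, rfl⟩ := cs.mem_subwordProds.mp hu
    exact ⟨ω, hω, rfl, τ, hτ, rfl⟩

theorem subwordProds_nil : cs.subwordProds [] = {1} := by
  simp [subwordProds]

theorem mem_subwordProds_cons {i : B} {ω : List B} {x : W} :
    x ∈ cs.subwordProds (i :: ω) ↔ x ∈ cs.subwordProds ω ∨ s i * x ∈ cs.subwordProds ω := by
  simp only [mem_subwordProds, List.sublist_cons_iff]
  constructor
  · rintro ⟨τ, hτ | ⟨τ, rfl, hτ⟩, rfl⟩
    · exact .inl ⟨τ, hτ, rfl⟩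
    · exact .inr ⟨τ, hτ, by rw [wordProd_cons, simple_mul_simple_cancel_left]⟩
  · rintro (⟨τ, hτ, rfl⟩ | ⟨τ, hτ, hx⟩)
    · exact ⟨τ, .inl hτ, rfl⟩
    · exact ⟨i :: τ, .inr ⟨τ, rfl, hτ⟩, by rw [wordProd_cons, hx, simple_mul_simple_cancel_left]⟩

theorem simple_mul_mem_subwordProds {ω : List B} {i : B} {u : W} (hu : u ∈ cs.subwordProds ω)
    (h : ℓ (s i * u) < ℓ u) : s i * u ∈ cs.subwordProds ω :=
  (cs.bruhatStep_simple_mul h).mem_subwordProds hu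

theorem subwordProds_cons (i : B) (ω : List B) :
    cs.subwordProds (i :: ω) =
      (cs.subwordProds ω).filter (fun u => ℓ u < ℓ (s i * u)) ∪
        ((cs.subwordProds ω).filter (fun u => ℓ u < ℓ (s i * u))).image (s i * ·) := by
  ext x
  simp only [mem_subwordProds_cons, Finset.mem_union, Finset.mem_filter, Finset.mem_image]
  constructor
  · rintro (hx | hx)
    · rcases lt_or_gt_of_ne (cs.length_simple_mul_ne x i) with h | h
      · exact .inr ⟨s i * x, ⟨cs.simple_mul_mem_subwordProds hx h, by
          rwa [simple_mul_simple_cancel_left]⟩, simple_mul_simple_cancel_left _ _⟩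
      · exact .inl ⟨hx, h⟩
    · rcases lt_or_gt_of_ne (cs.length_simple_mul_ne x i) with h | h
      · exact .inr ⟨s i * x, ⟨hx, by rwa [simple_mul_simple_cancel_left]⟩,
          simple_mul_simple_cancel_left _ _⟩
      · refine .inl ⟨?_, h⟩
        simpa using cs.simple_mul_mem_subwordProds (i := i) hx (by simpa using h)
  · rintro (⟨hx, -⟩ | ⟨v, ⟨hv, -⟩, rfl⟩)
    · exact .inl hx
    · exact .inr (by rwa [simple_mul_simple_cancel_left])

theorem sum_union_image_simple_mul {N : Type*} [AddCommMonoid N] {i : B} {A : Finset W}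
    (hA : ∀ u ∈ A, ℓ u < ℓ (s i * u)) (f : W → N) :
    ∑ u ∈ A ∪ A.image (s i * ·), f u = ∑ u ∈ A, (f u + f (s i * u)) := by
  have hdisj : Disjoint A (A.image (s i * ·)) := by
    rw [Finset.disjoint_left]
    intro u hu hu'
    obtain ⟨v, hv, rfl⟩ := Finset.mem_image.mp hu'
    have := hA _ hu
    rw [simple_mul_simple_cancel_left] at this
    have := hA v hv
    omega
  rw [Finset.sum_union hdisj, Finset.sum_image fun _ _ _ _ h => mul_left_cancel h,
    Finset.sum_add_distrib]

end SubwordProds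

theorem projSimple_projSimple (i : B) (w : W) :
    cs.projSimple i (cs.projSimple i w) = cs.projSimple i w := by
  unfold projSimple
  by_cases h : ℓ (w * s i) < ℓ w
  · rw [if_pos h, if_neg (by rw [simple_mul_simple_cancel_right]; omega)]
  · rw [if_neg h, if_neg h]

theorem projS_mul_lmapDomain (i : B) (g : W → W) :
    cs.projS i * Finsupp.lmapDomain ℤ ℤ g = Finsupp.lmapDomain ℤ ℤ (cs.projSimple i ∘ g) :=
  (Finsupp.lmapDomain_comp ℤ ℤ g (cs.projSimple i)).symm

theorem projS_mul_projS (i : B) : cs.projS i * cs.projS i = cs.projS i := by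
  nth_rw 2 [projS]
  rw [projS_mul_lmapDomain, projS]
  congr 1
  funext w
  exact cs.projSimple_projSimple i w

def IsProjFamily_s15 (PU : W → Module.End ℤ (W →₀ ℤ)) : Prop :=
  ∀ (u : W) (ω : List B), cs.IsReduced ω → π ω = u →
    PU u = Finsupp.lmapDomain ℤ ℤ (cs.projWord ω)

variable {cs} {PU : W → Module.End ℤ (W →₀ ℤ)}

theorem IsProjFamily_s15.projS_mul_of_lt (hPU : cs.IsProjFamily_s15 PU) {i : B} {u : W}
    (h : ℓ u < ℓ (s i * u)) : cs.projS i * PU u = PU (s i * u) := by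
  obtain ⟨ρ, hρ, rfl⟩ := cs.exists_isReduced u
  have hiρ : cs.IsReduced (i :: ρ) := by
    rw [IsReduced, wordProd_cons, List.length_cons, ← hρ.eq]
    rcases cs.length_simple_mul (π ρ) i with h' | h' <;> omega
  rw [hPU _ ρ hρ rfl, hPU _ (i :: ρ) hiρ (wordProd_cons ..), projS_mul_lmapDomain]
  rfl

theorem IsProjFamily_s15.projS_mul_of_gt (hPU : cs.IsProjFamily_s15 PU) {i : B} {u : W}
    (h : ℓ (s i * u) < ℓ u) : cs.projS i * PU u = PU u := by
  have hu := hPU.projS_mul_of_lt (i := i) (u := s i * u) (by rwa [simple_mul_simple_cancel_left])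
  rw [simple_mul_simple_cancel_left] at hu
  rw [← hu, ← mul_assoc, projS_mul_projS]

theorem IsProjFamily_s15.one_sub_projS_mul (hPU : cs.IsProjFamily_s15 PU) (i : B) (u : W) :
    (1 - cs.projS i) * PU u = if ℓ u < ℓ (s i * u) then PU u - PU (s i * u) else 0 := by
  rw [sub_mul, one_mul]
  split_ifs with h
  · rw [hPU.projS_mul_of_lt h]
  · rw [hPU.projS_mul_of_gt (lt_of_le_of_ne (not_lt.mp h) (cs.length_simple_mul_ne u i)),
      sub_self]

theorem IsProjFamily_s15.projBarWord_eq_sum [DecidableEq W] (hPU : cs.IsProjFamily_s15 PU)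
    (ω : List B) : cs.projBarWord ω = ∑ u ∈ cs.subwordProds ω, ((-1 : ℤ) ^ ℓ u) • PU u := by
  induction ω with
  | nil =>
    rw [subwordProds_nil, Finset.sum_singleton, length_one, pow_zero, one_smul,
      hPU 1 [] (by simp [IsReduced]) rfl]
    exact Finsupp.lmapDomain_id ℤ ℤ |>.symm
  | cons i ω ih =>
    calc cs.projBarWord (i :: ω)
        = ∑ u ∈ cs.subwordProds ω, ((-1 : ℤ) ^ ℓ u) • ((1 - cs.projS i) * PU u) := by
          rw [show cs.projBarWord (i :: ω) = (1 - cs.projS i) * cs.projBarWord ω from rfl, ih,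
            Finset.mul_sum]
          simp only [mul_smul_comm]
      _ = ∑ u ∈ (cs.subwordProds ω).filter (fun u => ℓ u < ℓ (s i * u)),
            (((-1 : ℤ) ^ ℓ u) • PU u + ((-1 : ℤ) ^ ℓ (s i * u)) • PU (s i * u)) := by
          rw [Finset.sum_filter]
          refine Finset.sum_congr rfl fun u _ => ?_
          rw [hPU.one_sub_projS_mul]
          split_ifs with h
          · rw [(cs.length_simple_mul u i).resolve_right (by omega), pow_succ, mul_neg_one,
              neg_smul, smul_sub, sub_eq_add_neg]
          · exact smul_zero _
      _ = ∑ u ∈ cs.subwordProds (i :: ω), ((-1 : ℤ) ^ ℓ u) • PU u := by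
          rw [subwordProds_cons,
            cs.sum_union_image_simple_mul fun u hu => (Finset.mem_filter.mp hu).2]

end CoxeterSystem

theorem stmt_15 (cs : CoxeterSystem M W) (v : W)
    (ω : List B) (hred : cs.IsReduced ω) (hprod : cs.wordProd ω = v)
    (PU : W → Module.End ℤ (W →₀ ℤ))
    (hPU : ∀ (u : W) (ω' : List B), cs.IsReduced ω' → cs.wordProd ω' = u →
      PU u = Finsupp.lmapDomain ℤ ℤ (cs.projWord ω'))
    (F : Finset W) (hF : ∀ u : W, u ∈ F ↔ cs.bruhatLE u v) :
    cs.projBarWord ω = ∑ u ∈ F, ((-1 : ℤ) ^ cs.length u) • PU u := by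
  classical
  have hF' : F = cs.subwordProds ω := by
    ext u
    rw [hF, ← hprod, cs.bruhatLE_wordProd_iff hred]
  rw [hF']
  exact IsProjFamily_s15.projBarWord_eq_sum hPU ω
end
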